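/- arXiv:2604.00185 — 2 statements merged into one kernel-verified Lean document; each statement's English description precedes it below -/
import Mathlib

section
/- Let P be an n-polytope, Φ a flag, K ⊆ N = {0,...,n-1}, and Φ_K the set of faces of Φ with ranks in K. Suppose for each i ∈ N \ K there is an automorphism ρ_i with Φρ_i = Φ^i. Then the subgroup ⟨ρ_i | i ∈ N \ K⟩ of Γ(P) acts transitively on the set of flags of P containing Φ_K. -/
/-- An abstract polytope of rank `n`, presented by a partially ordered type of faces
with a strictly monotone rank function onto `{-1, 0, ..., n}`, such that every flag
(maximal chain) has exactly one face of each rank (`faceAt`), every flag has a unique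
`i`-adjacent flag for each `i = 0, ..., n-1` (the diamond condition, via `adj`), and
which is strongly flag-connected. -/
structure AbstractPolytope (n : ℕ) (Face : Type*) [PartialOrder Face] where
  rank : Face → ℤ
  rank_strictMono : ∀ {F G : Face}, F < G → rank F < rank G
  rank_le : ∀ F : Face, -1 ≤ rank F ∧ rank F ≤ (n : ℤ)
  /-- the unique face of rank `i` in the flag `Φ`, for `-1 ≤ i ≤ n` -/
  faceAt : Flag Face → ℤ → Face
  faceAt_mem : ∀ (Φ : Flag Face) (i : ℤ), -1 ≤ i → i ≤ (n : ℤ) → faceAt Φ i ∈ Φ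
  faceAt_rank : ∀ (Φ : Flag Face) (i : ℤ), -1 ≤ i → i ≤ (n : ℤ) → rank (faceAt Φ i) = i
  faceAt_eq : ∀ (Φ : Flag Face) (F : Face), F ∈ Φ → faceAt Φ (rank F) = F
  /-- the unique `i`-adjacent flag of `Φ`, for `0 ≤ i ≤ n-1` -/
  adj : Flag Face → ℕ → Flag Face
  adj_ne : ∀ (Φ : Flag Face) (i : ℕ), i < n → adj Φ i ≠ Φ
  adj_mem : ∀ (Φ : Flag Face) (i : ℕ), i < n →
    ∀ F ∈ Φ, rank F ≠ (i : ℤ) → F ∈ adj Φ i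
  adj_unique : ∀ (Φ Ψ : Flag Face) (i : ℕ), i < n → Ψ ≠ Φ →
    (∀ F ∈ Φ, rank F ≠ (i : ℤ) → F ∈ Ψ) → Ψ = adj Φ i
  /-- strong flag-connectedness: any two flags are joined by a sequence of successively
  adjacent flags, with all adjacencies at ranks not occurring among their common faces -/
  connected : ∀ Φ Ψ : Flag Face, ∃ (l : ℕ) (c : ℕ → Flag Face), c 0 = Φ ∧ c l = Ψ ∧
    ∀ m < l, ∃ i : ℕ, i < n ∧ c (m + 1) = adj (c m) i ∧
      ∀ F : Face, F ∈ Φ → F ∈ Ψ → rank F ≠ (i : ℤ)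

namespace AbstractPolytope

variable {n : ℕ} {Face : Type*} [PartialOrder Face]

/-- The automorphism group `Γ(P)`: order automorphisms of the set of faces.
It acts on flags via `Flag.map`; `g • Φ` denotes the image flag. -/
instance : MulAction (Face ≃o Face) (Flag Face) where
  smul g Φ := Flag.map g Φ
  one_smul Φ := by
    show Flag.map 1 Φ = Φ
    ext x
    simp [Flag.map, Flag.ofIsMaxChain]
  mul_smul g h Φ := by
    show Flag.map (g * h) Φ = Flag.map g (Flag.map h Φ)
    ext x
    simp [Flag.map, Flag.ofIsMaxChain, Set.image_image]

lemma smul_flag_def (g : Face ≃o Face) (Φ : Flag Face) : g • Φ = Flag.map g Φ := rfl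

/-- Two flags lie in the same orbit under the automorphism group. -/
def SameOrbit (Φ Ψ : Flag Face) : Prop := ∃ g : Face ≃o Face, g • Φ = Ψ

/-- The polytope has exactly two orbits on flags. -/
def TwoOrbit (_A : AbstractPolytope n Face) : Prop :=
  ∃ Φ Ψ : Flag Face, ¬ SameOrbit Φ Ψ ∧ ∀ X : Flag Face, SameOrbit X Φ ∨ SameOrbit X Ψ

/-- `I` is the class type set of the two-orbit polytope `A`: it consists precisely of
those ranks `i ∈ {0,...,n-1}` such that every flag and its `i`-adjacent flag lie in the
same orbit; that is, `A` is in the class `2_I`. -/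
def InClass (A : AbstractPolytope n Face) (I : Set ℕ) : Prop :=
  (∀ i ∈ I, i < n) ∧ ∀ i : ℕ, i < n → (i ∈ I ↔ ∀ Φ : Flag Face, SameOrbit Φ (A.adj Φ i))

/-- The stabilizer in the automorphism group of a face `F`. -/
def faceStab (_A : AbstractPolytope n Face) (F : Face) : Subgroup (Face ≃o Face) where
  carrier := {g : Face ≃o Face | g F = F}
  one_mem' := rfl
  mul_mem' := by
    intro a b ha hb
    show (a * b) F = F
    rw [RelIso.mul_apply]
    rw [show b F = F from hb, show a F = F from ha]
  inv_mem' := by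
    intro a ha
    show a⁻¹ F = F
    conv_lhs => rw [← show a F = F from ha]
    exact a.symm_apply_apply F

lemma mem_faceStab {A : AbstractPolytope n Face} {F : Face} {g : Face ≃o Face} :
    g ∈ A.faceStab F ↔ g F = F := Iff.rfl

end AbstractPolytope

namespace AbstractPolytope

variable {n : ℕ} {Face : Type*} [PartialOrder Face]

lemma exists_flag_mem (F : Face) : ∃ Ψ : Flag Face, F ∈ Ψ := by
  obtain ⟨M, hM, hFM⟩ := (Set.subsingleton_singleton (a := F)).isChain.exists_maxChain
  exact ⟨Flag.ofIsMaxChain M hM, hFM rfl⟩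

lemma mem_smul_flag {g : Face ≃o Face} {Ψ : Flag Face} {F : Face} :
    F ∈ g • Ψ ↔ ∃ G ∈ Ψ, g G = F := by
  rw [smul_flag_def]
  change F ∈ (Flag.map g Ψ : Set Face) ↔ _
  rw [Flag.coe_map]
  simp [Set.mem_image]

lemma lt_of_mem_of_rank_lt (A : AbstractPolytope n Face) {Ψ : Flag Face} {F G : Face}
    (hF : F ∈ Ψ) (hG : G ∈ Ψ) (h : A.rank F < A.rank G) : F < G := by
  rcases Ψ.le_or_le hF hG with h1 | h1
  · rcases eq_or_lt_of_le h1 with rfl | h2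
    · exact absurd h (lt_irrefl _)
    · exact h2
  · rcases eq_or_lt_of_le h1 with rfl | h2
    · exact absurd h (lt_irrefl _)
    · exact absurd (A.rank_strictMono h2) (not_lt_of_gt h)

lemma rank_le_rank_apply (A : AbstractPolytope n Face) (g : Face ≃o Face) (F : Face) :
    A.rank F ≤ A.rank (g F) := by
  suffices H : ∀ j : ℕ, ∀ F : Face, A.rank F + 1 ≤ (j : ℤ) → A.rank F ≤ A.rank (g F) by
    refine H (n + 1) F ?_
    have := (A.rank_le F).2
    push_cast
    omega
  intro j
  induction j with
  | zero =>
    intro F hF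
    have := (A.rank_le (g F)).1
    omega
  | succ j ih =>
    intro F hF
    rcases le_or_gt (A.rank F) (-1) with h0 | h0
    · have := (A.rank_le (g F)).1; omega
    · obtain ⟨Ψ, hFΨ⟩ := exists_flag_mem F
      set G := A.faceAt Ψ (A.rank F - 1) with hGdef
      have hb1 : (-1 : ℤ) ≤ A.rank F - 1 := by omega
      have hb2 : A.rank F - 1 ≤ (n : ℤ) := by have := (A.rank_le F).2; omega
      have hGΨ : G ∈ Ψ := A.faceAt_mem Ψ _ hb1 hb2
      have hGrank : A.rank G = A.rank F - 1 := A.faceAt_rank Ψ _ hb1 hb2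
      have hGF : G < F := A.lt_of_mem_of_rank_lt hGΨ hFΨ (by omega)
      have h1 : A.rank G ≤ A.rank (g G) := ih G (by omega)
      have h2 : A.rank (g G) < A.rank (g F) := A.rank_strictMono (g.strictMono hGF)
      omega

lemma rank_apply (A : AbstractPolytope n Face) (g : Face ≃o Face) (F : Face) :
    A.rank (g F) = A.rank F := by
  have h1 := A.rank_le_rank_apply g F
  have h2 := A.rank_le_rank_apply g.symm (g F)
  rw [g.symm_apply_apply] at h2
  omega

lemma smul_adj (A : AbstractPolytope n Face) (g : Face ≃o Face) (Ψ : Flag Face) (i : ℕ)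
    (hi : i < n) : g • A.adj Ψ i = A.adj (g • Ψ) i := by
  refine A.adj_unique (g • Ψ) (g • A.adj Ψ i) i hi ?_ ?_
  · intro h
    exact A.adj_ne Ψ i hi (smul_left_cancel g h)
  · intro F hF hrank
    obtain ⟨G, hGΨ, rfl⟩ := mem_smul_flag.mp hF
    rw [A.rank_apply] at hrank
    exact mem_smul_flag.mpr ⟨G, A.adj_mem Ψ i hi G hGΨ hrank, rfl⟩

end AbstractPolytope

open AbstractPolytope in
/-- If for each rank `i ∉ K` there is an automorphism `ρ i` mapping the flag
`Φ` to its `i`-adjacent flag, then the subgroup generated by these acts transitively on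
the set of flags containing the subchain `Φ_K`. -/
theorem stmt2 {n : ℕ} {Face : Type*} [PartialOrder Face] (A : AbstractPolytope n Face)
    (Φ : Flag Face) (K : Set ℕ) (hK : ∀ j ∈ K, j < n)
    (ρ : ℕ → (Face ≃o Face))
    (hρ : ∀ i : ℕ, i < n → i ∉ K → (ρ i) • Φ = A.adj Φ i) :
    ∀ Ψ₁ Ψ₂ : Flag Face,
      (∀ j ∈ K, A.faceAt Φ (j : ℤ) ∈ Ψ₁) → (∀ j ∈ K, A.faceAt Φ (j : ℤ) ∈ Ψ₂) →
      ∃ g ∈ Subgroup.closure {x : Face ≃o Face | ∃ i : ℕ, i < n ∧ i ∉ K ∧ x = ρ i},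
        g • Ψ₁ = Ψ₂ := by
  have key : ∀ Ψ : Flag Face, (∀ j ∈ K, A.faceAt Φ (j : ℤ) ∈ Ψ) →
      ∃ g ∈ Subgroup.closure {x : Face ≃o Face | ∃ i : ℕ, i < n ∧ i ∉ K ∧ x = ρ i},
        g • Φ = Ψ := by
    intro Ψ hΨ
    obtain ⟨l, c, hc0, hcl, hstep⟩ := A.connected Φ Ψ
    have main : ∀ m ≤ l,
        ∃ g ∈ Subgroup.closure {x : Face ≃o Face | ∃ i : ℕ, i < n ∧ i ∉ K ∧ x = ρ i},
          g • Φ = c m := by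
      intro m
      induction m with
      | zero => exact fun _ => ⟨1, Subgroup.one_mem _, by rw [hc0, one_smul]⟩
      | succ m ih =>
        intro hm
        obtain ⟨g, hg, hgΦ⟩ := ih (by omega)
        obtain ⟨i, hi, hci, hcommon⟩ := hstep m (by omega)
        have hiK : i ∉ K := by
          intro hiK
          refine hcommon (A.faceAt Φ (i : ℤ)) ?_ (hΨ i hiK) ?_
          · exact A.faceAt_mem Φ i (by omega) (by exact_mod_cast (hK i hiK).le)
          · rw [A.faceAt_rank Φ i (by omega) (by exact_mod_cast (hK i hiK).le)]
        refine ⟨g * ρ i, Subgroup.mul_mem _ hg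
          (Subgroup.subset_closure ⟨i, hi, hiK, rfl⟩), ?_⟩
        rw [hci, ← hgΦ, mul_smul, ← A.smul_adj g Φ i hi, ← hρ i hi hiK]
    obtain ⟨g, hg, hgΦ⟩ := main l le_rfl
    exact ⟨g, hg, by rw [hgΦ, hcl]⟩
  intro Ψ₁ Ψ₂ h₁ h₂
  obtain ⟨g₁, hg₁, hg₁Φ⟩ := key Ψ₁ h₁
  obtain ⟨g₂, hg₂, hg₂Φ⟩ := key Ψ₂ h₂
  refine ⟨g₂ * g₁⁻¹, Subgroup.mul_mem _ hg₂ (Subgroup.inv_mem _ hg₁), ?_⟩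
  rw [mul_smul, ← hg₁Φ, inv_smul_smul, hg₂Φ]
end

section
/- Let P be a two-orbit n-polytope in class 2_I, and let -1 ≤ i ≤ j ≤ n. If N \ I is not contained in {i,j}, then Γ(P) acts transitively on the set S_{i,j}(P) of all sections G/F with F an i-face, G a j-face, F ≤ G. If N \ I ⊆ {i,j}, then Γ(P) has exactly two orbits on S_{i,j}(P), represented by Φ_j/Φ_i and (Φ^k)_j/(Φ^k)_i for any k ∉ I and any flag Φ. -/
section Helpers

namespace AbstractPolytope

variable {n : ℕ} {Face : Type*} [PartialOrder Face] {A : AbstractPolytope n Face}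

lemma mem_smul_iff {g : Face ≃o Face} {Φ : Flag Face} {x : Face} :
    x ∈ g • Φ ↔ ∃ y ∈ Φ, g y = x := by
  rw [smul_flag_def, ← SetLike.mem_coe, Flag.coe_map]
  simp [Set.mem_image]

lemma mem_smul (g : Face ≃o Face) {Φ : Flag Face} {F : Face} (h : F ∈ Φ) :
    g F ∈ g • Φ := mem_smul_iff.2 ⟨F, h, rfl⟩

lemma int_aux {N : ℤ} (h : ℤ → ℤ)
    (hmono : ∀ a b : ℤ, -1 ≤ a → a < b → b ≤ N → h a < h b)
    (hlb : -1 ≤ h (-1)) (hub : h N ≤ N) :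
    ∀ m : ℤ, -1 ≤ m → m ≤ N → h m = m := by
  have key : ∀ d : ℕ, ∀ a : ℤ, -1 ≤ a → a + d ≤ N → h a + d ≤ h (a + d) := by
    intro d
    induction d with
    | zero => intro a _ _; simp
    | succ d ih =>
      intro a ha hd
      have hd' : a + ((d : ℤ) + 1) ≤ N := by push_cast at hd; omega
      have h1 : h a + d ≤ h (a + d) := ih a ha (by omega)
      have h2 : h (a + (d : ℤ)) < h (a + ((d : ℤ) + 1)) :=
        hmono _ _ (by omega) (by omega) hd'
      have e : ((d + 1 : ℕ) : ℤ) = (d : ℤ) + 1 := by push_cast; ring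
      rw [e]
      omega
  intro m hm hmn
  have k1 := key (m + 1).toNat (-1) le_rfl (by rw [Int.toNat_of_nonneg (by omega)]; omega)
  have k2 := key (N - m).toNat m hm (by rw [Int.toNat_of_nonneg (by omega)]; omega)
  rw [Int.toNat_of_nonneg (show (0:ℤ) ≤ m + 1 by omega)] at k1
  rw [Int.toNat_of_nonneg (show (0:ℤ) ≤ N - m by omega)] at k2
  have e1 : (-1 : ℤ) + (m + 1) = m := by ring
  have e2 : m + (N - m) = N := by ring
  rw [e1] at k1
  rw [e2] at k2
  omega

lemma faceAt_lt (Φ : Flag Face) {a b : ℤ} (ha : -1 ≤ a) (hab : a < b) (hb : b ≤ (n : ℤ)) :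
    A.faceAt Φ a < A.faceAt Φ b := by
  have hma := A.faceAt_mem Φ a ha (by omega)
  have hmb := A.faceAt_mem Φ b (by omega) hb
  have hra := A.faceAt_rank Φ a ha (by omega)
  have hrb := A.faceAt_rank Φ b (by omega) hb
  rcases Φ.le_or_le hma hmb with h | h
  · rcases lt_or_eq_of_le h with h | h
    · exact h
    · rw [h] at hra; omega
  · rcases lt_or_eq_of_le h with h | h
    · have := A.rank_strictMono h; omega
    · rw [h] at hrb; omega

lemma faceAt_smul (g : Face ≃o Face) (Φ : Flag Face) {m : ℤ} (h1 : -1 ≤ m) (h2 : m ≤ (n : ℤ)) :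
    A.faceAt (g • Φ) m = g (A.faceAt Φ m) := by
  have heq : ∀ m' : ℤ, -1 ≤ m' → m' ≤ (n : ℤ) →
      A.faceAt (g • Φ) (A.rank (g (A.faceAt Φ m'))) = g (A.faceAt Φ m') :=
    fun m' hm hm' => A.faceAt_eq _ _ (mem_smul g (A.faceAt_mem Φ m' hm hm'))
  have hid : ∀ m' : ℤ, -1 ≤ m' → m' ≤ (n : ℤ) → A.rank (g (A.faceAt Φ m')) = m' := by
    apply int_aux (fun m' => A.rank (g (A.faceAt Φ m')))
    · intro a b ha hab hb
      exact A.rank_strictMono (g.strictMono (faceAt_lt Φ ha hab hb))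
    · exact (A.rank_le _).1
    · exact (A.rank_le _).2
  have := heq m h1 h2
  rwa [hid m h1 h2] at this

lemma exists_flag_pair {F G : Face} (hFG : F ≤ G) : ∃ Φ : Flag Face, F ∈ Φ ∧ G ∈ Φ := by
  have hc : IsChain (· ≤ ·) ({F, G} : Set Face) := by
    intro a ha b hb hab
    rcases ha with rfl | rfl <;> rcases hb with rfl | rfl <;> simp_all
  obtain ⟨M, hM, hsub⟩ := hc.exists_maxChain
  exact ⟨Flag.ofIsMaxChain M hM, hsub (by simp), hsub (by simp)⟩

lemma rank_smul (g : Face ≃o Face) (F : Face) : A.rank (g F) = A.rank F := by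
  obtain ⟨Φ, hF, -⟩ := exists_flag_pair (le_refl F)
  have h1 := A.rank_le F
  have e : A.faceAt Φ (A.rank F) = F := A.faceAt_eq Φ F hF
  have h2 := faceAt_smul (A := A) g Φ h1.1 h1.2
  rw [e] at h2
  rw [← h2, A.faceAt_rank _ _ h1.1 h1.2]

lemma smul_adj_s6 (g : Face ≃o Face) (Φ : Flag Face) {k : ℕ} (hk : k < n) :
    g • A.adj Φ k = A.adj (g • Φ) k := by
  apply A.adj_unique (g • Φ) _ k hk
  · intro h
    exact A.adj_ne Φ k hk (smul_left_cancel g h)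
  · intro F hF hrF
    obtain ⟨y, hy, rfl⟩ := mem_smul_iff.1 hF
    rw [rank_smul] at hrF
    exact mem_smul g (A.adj_mem Φ k hk y hy hrF)

lemma adj_adj (Φ : Flag Face) {k : ℕ} (hk : k < n) : A.adj (A.adj Φ k) k = Φ := by
  symm
  apply A.adj_unique (A.adj Φ k) Φ k hk (Ne.symm (A.adj_ne Φ k hk))
  intro F hF hrF
  have h1 := A.rank_le F
  have e1 : A.faceAt (A.adj Φ k) (A.rank F) = F := A.faceAt_eq _ F hF
  have h2 : A.faceAt Φ (A.rank F) ∈ A.adj Φ k :=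
    A.adj_mem Φ k hk _ (A.faceAt_mem Φ _ h1.1 h1.2)
      (by rw [A.faceAt_rank _ _ h1.1 h1.2]; exact hrF)
  have e2 : A.faceAt (A.adj Φ k) (A.rank (A.faceAt Φ (A.rank F))) = A.faceAt Φ (A.rank F) :=
    A.faceAt_eq _ _ h2
  rw [A.faceAt_rank _ _ h1.1 h1.2] at e2
  rw [← e1, e2]
  exact A.faceAt_mem Φ _ h1.1 h1.2

lemma sameOrbit_refl (Φ : Flag Face) : SameOrbit Φ Φ := ⟨1, one_smul _ _⟩

lemma sameOrbit_symm {Φ Ψ : Flag Face} (h : SameOrbit Φ Ψ) : SameOrbit Ψ Φ := by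
  obtain ⟨g, rfl⟩ := h; exact ⟨g⁻¹, inv_smul_smul g Φ⟩

lemma sameOrbit_trans {Φ Ψ X : Flag Face} (h1 : SameOrbit Φ Ψ) (h2 : SameOrbit Ψ X) :
    SameOrbit Φ X := by
  obtain ⟨g, rfl⟩ := h1; obtain ⟨h, rfl⟩ := h2; exact ⟨h * g, mul_smul h g Φ⟩

lemma sameOrbit_adj {Φ Ψ : Flag Face} {k : ℕ} (hk : k < n) (h : SameOrbit Φ Ψ) :
    SameOrbit (A.adj Φ k) (A.adj Ψ k) := by
  obtain ⟨g, rfl⟩ := h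
  exact ⟨g, smul_adj_s6 g Φ hk⟩

lemma sameOrbit_resolve (h2 : A.TwoOrbit) {Φ Ψ X : Flag Face}
    (hp : ¬ SameOrbit Φ X) (hq : ¬ SameOrbit Ψ X) : SameOrbit Φ Ψ := by
  obtain ⟨U, V, _, hpart⟩ := h2
  rcases hpart Φ with hΦ | hΦ <;> rcases hpart Ψ with hΨ | hΨ
  · exact sameOrbit_trans hΦ (sameOrbit_symm hΨ)
  · rcases hpart X with hX | hX
    · exact absurd (sameOrbit_trans hΦ (sameOrbit_symm hX)) hp
    · exact absurd (sameOrbit_trans hΨ (sameOrbit_symm hX)) hq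
  · rcases hpart X with hX | hX
    · exact absurd (sameOrbit_trans hΨ (sameOrbit_symm hX)) hq
    · exact absurd (sameOrbit_trans hΦ (sameOrbit_symm hX)) hp
  · exact sameOrbit_trans hΦ (sameOrbit_symm hΨ)

lemma not_sameOrbit_adj (h2 : A.TwoOrbit) {I : Set ℕ} (hI : A.InClass I)
    {k : ℕ} (hk : k < n) (hkI : k ∉ I) (Ψ : Flag Face) :
    ¬ SameOrbit Ψ (A.adj Ψ k) := by
  have hex : ∃ Φ0 : Flag Face, ¬ SameOrbit Φ0 (A.adj Φ0 k) := by
    by_contra hall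
    push_neg at hall
    exact hkI ((hI.2 k hk).2 hall)
  obtain ⟨Φ0, hΦ0⟩ := hex
  intro hcon
  by_cases hc : SameOrbit Ψ Φ0
  · have h3 := sameOrbit_adj (A := A) hk hc
    exact hΦ0 (sameOrbit_trans (sameOrbit_symm hc) (sameOrbit_trans hcon h3))
  · have hΨ0 : SameOrbit Ψ (A.adj Φ0 k) :=
      sameOrbit_resolve h2 hc (fun h => hΦ0 (sameOrbit_symm h))
    have h4 := sameOrbit_adj (A := A) hk hΨ0
    rw [adj_adj Φ0 hk] at h4
    exact hc (sameOrbit_trans hcon h4)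

lemma sameOrbit_of_common {I : Set ℕ} (hI : A.InClass I) {Φ Ψ : Flag Face} {i j : ℤ}
    {F G : Face}
    (hsub : ∀ k : ℕ, k < n → k ∉ I → ((k : ℤ) = i ∨ (k : ℤ) = j))
    (hFΦ : F ∈ Φ) (hFΨ : F ∈ Ψ) (hGΦ : G ∈ Φ) (hGΨ : G ∈ Ψ)
    (hrF : A.rank F = i) (hrG : A.rank G = j) :
    SameOrbit Φ Ψ := by
  obtain ⟨l, c, hc0, hcl, hstep⟩ := A.connected Φ Ψ
  suffices h : ∀ m, m ≤ l → SameOrbit Φ (c m) by rw [← hcl]; exact h l le_rfl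
  intro m
  induction m with
  | zero => intro _; rw [hc0]; exact sameOrbit_refl Φ
  | succ m ih =>
    intro hm
    obtain ⟨k, hk, hadj, hav⟩ := hstep m (by omega)
    have hkI : k ∈ I := by
      by_contra hkn
      rcases hsub k hk hkn with h | h
      · exact hav F hFΦ hFΨ (by rw [hrF, h])
      · exact hav G hGΦ hGΨ (by rw [hrG, h])
    have hstep' := (hI.2 k hk).1 hkI (c m)
    rw [hadj]
    exact sameOrbit_trans (ih (by omega)) hstep'

end AbstractPolytope

end Helpers

open AbstractPolytope in
/-- Transitivity properties of `Γ(P)` on the set `S_{i,j}(P)` of sections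
determined by an incident pair of an `i`-face and a `j`-face (a section is identified
with its determining incident pair): one orbit if `N \ I ⊄ {i,j}`, exactly two orbits,
with the stated representatives, if `N \ I ⊆ {i,j}`. -/
theorem stmt6 {n : ℕ} {Face : Type*} [PartialOrder Face] (A : AbstractPolytope n Face)
    (I : Set ℕ) (h2 : A.TwoOrbit) (hI : A.InClass I)
    (i j : ℤ) (hi : -1 ≤ i) (hij : i ≤ j) (hj : j ≤ (n : ℤ)) :
    ((¬ ∀ k : ℕ, k < n → k ∉ I → ((k : ℤ) = i ∨ (k : ℤ) = j)) →
      ∀ F G F' G' : Face, A.rank F = i → A.rank G = j → F ≤ G →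
        A.rank F' = i → A.rank G' = j → F' ≤ G' →
        ∃ g : Face ≃o Face, g F = F' ∧ g G = G')
    ∧ ((∀ k : ℕ, k < n → k ∉ I → ((k : ℤ) = i ∨ (k : ℤ) = j)) →
      ∀ k : ℕ, k < n → k ∉ I → ∀ Φ : Flag Face,
        (∀ F G : Face, A.rank F = i → A.rank G = j → F ≤ G →
          (∃ g : Face ≃o Face, g (A.faceAt Φ i) = F ∧ g (A.faceAt Φ j) = G) ∨
          (∃ g : Face ≃o Face,
            g (A.faceAt (A.adj Φ k) i) = F ∧ g (A.faceAt (A.adj Φ k) j) = G))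
        ∧ ¬ ∃ g : Face ≃o Face, g (A.faceAt Φ i) = A.faceAt (A.adj Φ k) i ∧
            g (A.faceAt Φ j) = A.faceAt (A.adj Φ k) j) := by
  have hin : i ≤ (n : ℤ) := hij.trans hj
  have hjm : -1 ≤ j := hi.trans hij
  constructor
  · -- Part 1: one orbit on sections
    intro hns F G F' G' hF hG hFG hF' hG' hFG'
    push_neg at hns
    obtain ⟨k0, hk0n, hk0I, hk0i, hk0j⟩ := hns
    obtain ⟨Φ, hFΦ, hGΦ⟩ := exists_flag_pair hFG
    obtain ⟨Ψ, hFΨ, hGΨ⟩ := exists_flag_pair hFG'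
    have key : ∀ (X : Flag Face) (g : Face ≃o Face), g • Φ = X → F' ∈ X → G' ∈ X →
        ∃ g : Face ≃o Face, g F = F' ∧ g G = G' := by
      intro X g hg hF'X hG'X
      refine ⟨g, ?_, ?_⟩
      · have e1 : A.faceAt Φ i = F := by rw [← hF]; exact A.faceAt_eq Φ F hFΦ
        have e2 : A.faceAt X i = F' := by rw [← hF']; exact A.faceAt_eq X F' hF'X
        rw [← e1, ← e2, ← hg]
        exact (faceAt_smul g Φ hi hin).symm
      · have e1 : A.faceAt Φ j = G := by rw [← hG]; exact A.faceAt_eq Φ G hGΦ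
        have e2 : A.faceAt X j = G' := by rw [← hG']; exact A.faceAt_eq X G' hG'X
        rw [← e1, ← e2, ← hg]
        exact (faceAt_smul g Φ hjm hj).symm
    by_cases hc : SameOrbit Φ Ψ
    · obtain ⟨g, hg⟩ := hc
      exact key Ψ g hg hFΨ hGΨ
    · have h1 : ¬ SameOrbit Ψ (A.adj Ψ k0) := not_sameOrbit_adj h2 hI hk0n hk0I Ψ
      have h2' : SameOrbit Φ (A.adj Ψ k0) :=
        sameOrbit_resolve h2 hc (fun h => h1 (sameOrbit_symm h))
      obtain ⟨g, hg⟩ := h2'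
      have hF'Ψ' : F' ∈ A.adj Ψ k0 :=
        A.adj_mem Ψ k0 hk0n F' hFΨ (by rw [hF']; exact fun h => hk0i h.symm)
      have hG'Ψ' : G' ∈ A.adj Ψ k0 :=
        A.adj_mem Ψ k0 hk0n G' hGΨ (by rw [hG']; exact fun h => hk0j h.symm)
      exact key (A.adj Ψ k0) g hg hF'Ψ' hG'Ψ'
  · -- Part 2: exactly two orbits
    intro hsub k hk hkI Φ
    have hnadj : ¬ SameOrbit Φ (A.adj Φ k) := not_sameOrbit_adj h2 hI hk hkI Φ
    constructor
    · intro F G hF hG hFG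
      obtain ⟨Ψ, hFΨ, hGΨ⟩ := exists_flag_pair hFG
      have eF : A.faceAt Ψ i = F := by rw [← hF]; exact A.faceAt_eq Ψ F hFΨ
      have eG : A.faceAt Ψ j = G := by rw [← hG]; exact A.faceAt_eq Ψ G hGΨ
      by_cases hc : SameOrbit Φ Ψ
      · left
        obtain ⟨g, hg⟩ := hc
        refine ⟨g, ?_, ?_⟩
        · rw [← eF, ← hg]; exact (faceAt_smul g Φ hi hin).symm
        · rw [← eG, ← hg]; exact (faceAt_smul g Φ hjm hj).symm
      · right
        have h2' : SameOrbit (A.adj Φ k) Ψ :=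
          sameOrbit_resolve h2 (fun h => hnadj (sameOrbit_symm h))
            (fun h => hc (sameOrbit_symm h))
        obtain ⟨g, hg⟩ := h2'
        refine ⟨g, ?_, ?_⟩
        · rw [← eF, ← hg]; exact (faceAt_smul g (A.adj Φ k) hi hin).symm
        · rw [← eG, ← hg]; exact (faceAt_smul g (A.adj Φ k) hjm hj).symm
    · rintro ⟨g, hgi, hgj⟩
      have hFmem : A.faceAt (A.adj Φ k) i ∈ g • Φ := by
        rw [← hgi]; exact mem_smul g (A.faceAt_mem Φ i hi hin)
      have hGmem : A.faceAt (A.adj Φ k) j ∈ g • Φ := by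
        rw [← hgj]; exact mem_smul g (A.faceAt_mem Φ j hjm hj)
      have hsame : SameOrbit (g • Φ) (A.adj Φ k) :=
        sameOrbit_of_common hI hsub hFmem (A.faceAt_mem _ i hi hin)
          hGmem (A.faceAt_mem _ j hjm hj)
          (A.faceAt_rank _ i hi hin) (A.faceAt_rank _ j hjm hj)
      exact hnadj (sameOrbit_trans ⟨g, rfl⟩ hsame)
end
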